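/- arXiv:1905.13344 — 3 statements merged into one kernel-verified Lean document; each statement's English description precedes it below -/
import Mathlib

section
/- Fix W ∈ ℝ^n, σ > 0, an integer m ≥ 2, measurable functions ρ_1,…,ρ_{R'} : ℝ^n × X × Y → ℝ and positive margins Δ_1,…,Δ_{R'}. For c ≥ 0 define the loss L_c(W',x,y) = 1 if there exists r ≤ R' with ρ_r(W',x,y) < c·Δ_r, and L_c(W',x,y) = 0 otherwise. Let μ_D(W) be the probability over (x,y) ∼ D that Pr_{U ∼ N(0,σ²I_n)}[∃ r : |ρ_r(W,x,y) − ρ_r(W+U,x,y)| > Δ_r/2] > 1/√m. Then E_{(x,y)∼D}[L_0(W,x,y)] ≤ E_{U ∼ N(0,σ²I_n)}[ E_{(x,y)∼D}[L_{1/2}(W+U,x,y)] ] + μ_D(W) + 1/(√m − 1). -/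
open MeasureTheory
open scoped Classical

/-- Spherical Gaussian measure on `ℝ^n` with mean `w` and variance `v` in each coordinate. -/
noncomputable def gaussVec {n : ℕ} (w : Fin n → ℝ) (v : ℝ) : Measure (Fin n → ℝ) :=
  Measure.pi fun i => ProbabilityTheory.gaussianReal (w i) v.toNNReal

/-- Indicator of a proposition, as a real number. -/
noncomputable def iver (P : Prop) : ℝ := if P then 1 else 0

lemma iver_nonneg (P : Prop) : 0 ≤ iver P := by
  unfold iver; split <;> norm_num

lemma iver_le_one (P : Prop) : iver P ≤ 1 := by
  unfold iver; split <;> norm_num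

lemma iver_of_pos {P : Prop} (h : P) : iver P = 1 := by
  unfold iver; rw [if_pos h]

lemma iver_of_neg {P : Prop} (h : ¬ P) : iver P = 0 := by
  unfold iver; rw [if_neg h]

/-- The margin-based loss `L_c(W', x, y) = 1` iff some property `ρ r` is below `c · Δ r`. -/
noncomputable def Lc {n N K R' : ℕ}
    (ρ : Fin R' → (Fin n → ℝ) → (Fin N → ℝ) → Fin K → ℝ) (Δ : Fin R' → ℝ)
    (c : ℝ) (W' : Fin n → ℝ) (x : Fin N → ℝ) (y : Fin K) : ℝ :=
  iver (∃ r, ρ r W' x y < c * Δ r)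

/-- the deterministic classifier's expected test loss `L_0` is bounded by the
Gaussian-perturbed (stochastic) classifier's expected test loss `L_{1/2}`, plus the test mass
of non-noise-resilient points, plus `1/(√m − 1)`. -/
theorem det_test_loss_le_stochastic_test_loss
    {n N K : ℕ} (R' : ℕ)
    (D : Measure ((Fin N → ℝ) × Fin K)) (hD : IsProbabilityMeasure D)
    (σ : ℝ) (hσ : 0 < σ) (m : ℕ) (hm : 2 ≤ m)
    (ρ : Fin R' → (Fin n → ℝ) → (Fin N → ℝ) → Fin K → ℝ)
    (hρ : ∀ r, Measurable fun q : (Fin n → ℝ) × (Fin N → ℝ) × Fin K => ρ r q.1 q.2.1 q.2.2)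
    (Δ : Fin R' → ℝ) (hΔ : ∀ r, 0 < Δ r)
    (W : Fin n → ℝ) :
    ∫ q, Lc ρ Δ 0 W q.1 q.2 ∂D ≤
      (∫ U, (∫ q, Lc ρ Δ (1 / 2) (W + U) q.1 q.2 ∂D) ∂(gaussVec (0 : Fin n → ℝ) (σ ^ 2)))
      + (D {q | ¬ ((gaussVec (0 : Fin n → ℝ) (σ ^ 2)
            {U | ∃ r, |ρ r W q.1 q.2 - ρ r (W + U) q.1 q.2| > Δ r / 2}).toReal
              ≤ 1 / Real.sqrt m)}).toReal
      + 1 / (Real.sqrt m - 1) := by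
  classical
  haveI := hD
  have hGprob : IsProbabilityMeasure (gaussVec (0 : Fin n → ℝ) (σ ^ 2)) := by
    unfold gaussVec; infer_instance
  set G := gaussVec (0 : Fin n → ℝ) (σ ^ 2) with hGdef
  haveI := hGprob
  set c : ℝ := 1 / Real.sqrt m with hc
  have hm1 : (1:ℝ) < Real.sqrt m := by
    rw [show (1:ℝ) = Real.sqrt 1 by simp]
    exact Real.sqrt_lt_sqrt (by norm_num) (by exact_mod_cast lt_of_lt_of_le one_lt_two hm)
  have hcpos : 0 < c := by positivity
  -- the "bad" set in the product space (q first, then U)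
  set T : Set (((Fin N → ℝ) × Fin K) × (Fin n → ℝ)) :=
    {p | ∃ r, |ρ r W p.1.1 p.1.2 - ρ r (W + p.2) p.1.1 p.1.2| > Δ r / 2} with hTdef
  have hT : MeasurableSet T := by
    have : T = ⋃ r, {p : ((Fin N → ℝ) × Fin K) × (Fin n → ℝ) |
        Δ r / 2 < |ρ r W p.1.1 p.1.2 - ρ r (W + p.2) p.1.1 p.1.2|} := by
      ext p; simp [hTdef]
    rw [this]
    refine MeasurableSet.iUnion fun r => measurableSet_lt measurable_const ?_
    have h1 : Measurable fun p : ((Fin N → ℝ) × Fin K) × (Fin n → ℝ) =>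
        ρ r W p.1.1 p.1.2 := (hρ r).comp (measurable_const.prodMk measurable_fst)
    have h2 : Measurable fun p : ((Fin N → ℝ) × Fin K) × (Fin n → ℝ) =>
        ρ r (W + p.2) p.1.1 p.1.2 :=
      (hρ r).comp ((measurable_snd.const_add W).prodMk measurable_fst)
    exact (h1.sub h2).abs
  set B : ((Fin N → ℝ) × Fin K) → Set (Fin n → ℝ) := fun q =>
    {U | ∃ r, |ρ r W q.1 q.2 - ρ r (W + U) q.1 q.2| > Δ r / 2} with hBdef
  have hBeq : ∀ q, B q = Prod.mk q ⁻¹' T := fun q => rfl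
  have hBmeas : ∀ q, MeasurableSet (B q) := fun q => (hBeq q) ▸ hT.preimage (measurable_prodMk_left)
  have hμB : Measurable fun q => G (B q) := by
    have := measurable_measure_prodMk_left (ν := G) hT
    simpa [← hBeq] using this
  -- the set of non-noise-resilient points
  set S : Set ((Fin N → ℝ) × Fin K) := {q | ¬ ((G (B q)).toReal ≤ c)} with hSdef
  have hS : MeasurableSet S := by
    have : S = {q | c < (G (B q)).toReal} := by ext q; simp [hSdef, not_le]
    rw [this]
    exact measurableSet_lt measurable_const hμB.ennreal_toReal
  -- the stochastic loss as a function on the product space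
  set F : (Fin n → ℝ) → ((Fin N → ℝ) × Fin K) → ℝ := fun U q =>
    Lc ρ Δ (1 / 2) (W + U) q.1 q.2 with hFdef
  have hFmeas : Measurable (Function.uncurry F) := by
    have : Function.uncurry F = (⋃ r, {p : (Fin n → ℝ) × ((Fin N → ℝ) × Fin K) |
        ρ r (W + p.1) p.2.1 p.2.2 < 1 / 2 * Δ r}).indicator (fun _ => (1:ℝ)) := by
      funext p
      simp only [Function.uncurry, hFdef, Lc, iver, Set.indicator_apply, Set.mem_iUnion,
        Set.mem_setOf_eq]
      by_cases h : ∃ r, ρ r (W + p.1) p.2.1 p.2.2 < 1 / 2 * Δ r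
      · simp [h]
      · simp [h]
    rw [this]
    refine Measurable.indicator measurable_const
      (MeasurableSet.iUnion fun r => measurableSet_lt ?_ measurable_const)
    exact (hρ r).comp ((measurable_fst.const_add W).prodMk measurable_snd)
  have hF01 : ∀ U q, 0 ≤ F U q ∧ F U q ≤ 1 := by
    intro U q; exact ⟨iver_nonneg _, iver_le_one _⟩
  have hFint : Integrable (Function.uncurry F) (G.prod D) := by
    refine (integrable_const (1:ℝ)).mono' hFmeas.aestronglyMeasurable
      (Filter.Eventually.of_forall fun p => ?_)
    show ‖F p.1 p.2‖ ≤ 1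
    rw [Real.norm_eq_abs, abs_le]
    exact ⟨by linarith [(hF01 p.1 p.2).1], (hF01 p.1 p.2).2⟩
  -- the deterministic loss
  have hL0meas : Measurable fun q : (Fin N → ℝ) × Fin K => Lc ρ Δ 0 W q.1 q.2 := by
    have : (fun q : (Fin N → ℝ) × Fin K => Lc ρ Δ 0 W q.1 q.2)
        = (⋃ r, {q : (Fin N → ℝ) × Fin K | ρ r W q.1 q.2 < 0 * Δ r}).indicator
          (fun _ => (1:ℝ)) := by
      funext q
      simp only [Lc, iver, Set.indicator_apply, Set.mem_iUnion, Set.mem_setOf_eq]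
      by_cases h : ∃ r, ρ r W q.1 q.2 < 0 * Δ r
      · simp [h]
      · simp [h]
    rw [this]
    refine Measurable.indicator measurable_const
      (MeasurableSet.iUnion fun r => measurableSet_lt ?_ measurable_const)
    exact (hρ r).comp (measurable_const.prodMk measurable_id)
  have hL001 : ∀ q : (Fin N → ℝ) × Fin K, 0 ≤ Lc ρ Δ 0 W q.1 q.2 ∧ Lc ρ Δ 0 W q.1 q.2 ≤ 1 := by
    intro q; exact ⟨iver_nonneg _, iver_le_one _⟩
  have hL0int : Integrable (fun q : (Fin N → ℝ) × Fin K => Lc ρ Δ 0 W q.1 q.2) D := by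
    refine (integrable_const (1:ℝ)).mono' hL0meas.aestronglyMeasurable
      (Filter.Eventually.of_forall fun q => ?_)
    rw [Real.norm_eq_abs, abs_le]
    exact ⟨by linarith [(hL001 q).1], (hL001 q).2⟩
  -- define the inner Gaussian integral
  set g : ((Fin N → ℝ) × Fin K) → ℝ := fun q => ∫ U, F U q ∂G with hgdef
  have hgint : Integrable g D := hFint.integral_prod_right
  have hgnonneg : ∀ q, 0 ≤ g q := fun q =>
    integral_nonneg fun U => (hF01 U q).1
  -- pointwise key inequality
  have hpt : ∀ q, Lc ρ Δ 0 W q.1 q.2 ≤ g q + S.indicator (fun _ => (1:ℝ)) q + c := by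
    intro q
    have hindnn : 0 ≤ S.indicator (fun _ => (1:ℝ)) q := by
      unfold Set.indicator; split <;> norm_num
    by_cases h0 : ∃ r, ρ r W q.1 q.2 < 0 * Δ r
    · have hL1 : Lc ρ Δ 0 W q.1 q.2 = 1 := iver_of_pos h0
      rw [hL1]
      by_cases hqS : q ∈ S
      · have : S.indicator (fun _ => (1:ℝ)) q = 1 := Set.indicator_of_mem hqS _
        rw [this]
        linarith [hgnonneg q, hcpos.le]
      · have hind0 : S.indicator (fun _ => (1:ℝ)) q = 0 := Set.indicator_of_notMem hqS _
        rw [hind0]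
        have hB : (G (B q)).toReal ≤ c := by
          by_contra hcon
          exact hqS hcon
        -- on the complement of B q, the stochastic loss is 1
        obtain ⟨r, hr⟩ := h0
        rw [zero_mul] at hr
        have hclaim : ∀ U, U ∈ (B q)ᶜ → F U q = 1 := by
          intro U hU
          have hnot : ¬ ∃ r', |ρ r' W q.1 q.2 - ρ r' (W + U) q.1 q.2| > Δ r' / 2 := hU
          push_neg at hnot
          have habs := hnot r
          have : ρ r (W + U) q.1 q.2 < 1 / 2 * Δ r := by
            have h1 : ρ r W q.1 q.2 - ρ r (W + U) q.1 q.2 ≥ -(Δ r / 2) := by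
              have := abs_le.mp habs; linarith [this.1]
            linarith
          exact iver_of_pos ⟨r, this⟩
        -- lower bound on g q
        have hgeq : g q ≥ ((G (B q)ᶜ)).toReal := by
          have hindint : Integrable ((B q)ᶜ.indicator (fun _ => (1:ℝ))) G :=
            (integrable_const (1:ℝ)).indicator (hBmeas q).compl
          have hFqint : Integrable (fun U => F U q) G := by
            refine (integrable_const (1:ℝ)).mono'
              ((hFmeas.comp (measurable_id.prodMk measurable_const)).aestronglyMeasurable)
              (Filter.Eventually.of_forall fun U => ?_)
            rw [Real.norm_eq_abs, abs_le]
            exact ⟨by linarith [(hF01 U q).1], (hF01 U q).2⟩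
          have hle : ∀ U, (B q)ᶜ.indicator (fun _ => (1:ℝ)) U ≤ F U q := by
            intro U
            by_cases hU : U ∈ (B q)ᶜ
            · rw [Set.indicator_of_mem hU, hclaim U hU]
            · rw [Set.indicator_of_notMem hU]; exact (hF01 U q).1
          calc ((G (B q)ᶜ)).toReal = ∫ U, (B q)ᶜ.indicator (fun _ => (1:ℝ)) U ∂G := by
                rw [integral_indicator_const (1:ℝ) (hBmeas q).compl]; simp; rfl
            _ ≤ ∫ U, F U q ∂G := integral_mono hindint hFqint hle
        have hcompl : ((G (B q)ᶜ)).toReal = 1 - (G (B q)).toReal := by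
          rw [measure_compl (hBmeas q) (measure_ne_top _ _), measure_univ,
            ENNReal.toReal_sub_of_le prob_le_one ENNReal.one_ne_top]
          simp
        have : 1 - c ≤ g q := by
          rw [hcompl] at hgeq; linarith
        linarith
    · have : Lc ρ Δ 0 W q.1 q.2 = 0 := iver_of_neg h0
      rw [this]
      have := hgnonneg q
      linarith [hcpos.le]
  -- integrate the pointwise inequality over D
  have hindint : Integrable (S.indicator (fun _ => (1:ℝ))) D :=
    (integrable_const (1:ℝ)).indicator hS
  have hRHSint : Integrable (fun q => g q + S.indicator (fun _ => (1:ℝ)) q + c) D :=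
    (hgint.add hindint).add (integrable_const c)
  have hmain : ∫ q, Lc ρ Δ 0 W q.1 q.2 ∂D
      ≤ ∫ q, (g q + S.indicator (fun _ => (1:ℝ)) q + c) ∂D :=
    integral_mono hL0int hRHSint hpt
  have hsplit : ∫ q, (g q + S.indicator (fun _ => (1:ℝ)) q + c) ∂D
      = (∫ q, g q ∂D) + (D S).toReal + c := by
    have h1 : Integrable (fun q => g q + S.indicator (fun _ => (1:ℝ)) q) D :=
      hgint.add hindint
    have e1 : ∫ q, (g q + S.indicator (fun _ => (1:ℝ)) q + c) ∂D
        = (∫ q, (g q + S.indicator (fun _ => (1:ℝ)) q) ∂D) + ∫ _q, c ∂D :=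
      integral_add h1 (integrable_const c)
    have e2 : ∫ q, (g q + S.indicator (fun _ => (1:ℝ)) q) ∂D
        = (∫ q, g q ∂D) + ∫ q, S.indicator (fun _ => (1:ℝ)) q ∂D :=
      integral_add hgint hindint
    rw [e1, e2, integral_const, integral_indicator_const (1:ℝ) hS]
    simp; rfl
  -- Fubini
  have hswap : ∫ q, g q ∂D = ∫ U, (∫ q, F U q ∂D) ∂G :=
    (integral_integral_swap hFint).symm
  -- final comparison of constants
  have hconst : c ≤ 1 / (Real.sqrt m - 1) := by
    rw [hc]
    apply one_div_le_one_div_of_le (by linarith)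
    linarith
  calc ∫ q, Lc ρ Δ 0 W q.1 q.2 ∂D
      ≤ (∫ q, g q ∂D) + (D S).toReal + c := hmain.trans_eq hsplit
    _ = (∫ U, (∫ q, F U q ∂D) ∂G) + (D S).toReal + c := by rw [hswap]
    _ ≤ (∫ U, (∫ q, F U q ∂D) ∂G) + (D S).toReal + 1 / (Real.sqrt m - 1) := by
        linarith
    _ = _ := by rfl
end

section
/- Fix W ∈ ℝ^n, σ > 0, an integer m ≥ 1, a finite dataset S of m points in X × Y, measurable functions ρ_1,…,ρ_{R'} : ℝ^n × X × Y → ℝ and positive margins Δ_1,…,Δ_{R'}. For c ≥ 0 define the loss L_c(W',x,y) = 1 if there exists r ≤ R' with ρ_r(W',x,y) < c·Δ_r, and L_c(W',x,y) = 0 otherwise. Let μ̂_S(W) be the fraction of points (x,y) in S for which Pr_{U ∼ N(0,σ²I_n)}[∃ r : |ρ_r(W,x,y) − ρ_r(W+U,x,y)| > Δ_r/2] > 1/√m. Then E_{U ∼ N(0,σ²I_n)}[ (1/m)·Σ_{(x,y)∈S} L_{1/2}(W+U,x,y) ] ≤ (1/m)·Σ_{(x,y)∈S} L_1(W,x,y)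 + μ̂_S(W) + 1/√m. -/
open MeasureTheory
open scoped Classical

/-- the Gaussian-perturbed (stochastic) classifier's training loss `L_{1/2}` on a
dataset `S` is bounded by the deterministic classifier's margin-based training loss `L_1`, plus the
fraction `μ̂_S(W)` of non-noise-resilient training points, plus `1/√m`. -/
theorem stochastic_train_loss_le_det_train_loss
    {n N K : ℕ} (R' : ℕ)
    (σ : ℝ) (hσ : 0 < σ) (m : ℕ) (hm : 1 ≤ m)
    (S : Fin m → (Fin N → ℝ) × Fin K)
    (ρ : Fin R' → (Fin n → ℝ) → (Fin N → ℝ) → Fin K → ℝ)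
    (hρ : ∀ r, Measurable fun q : (Fin n → ℝ) × (Fin N → ℝ) × Fin K => ρ r q.1 q.2.1 q.2.2)
    (Δ : Fin R' → ℝ) (hΔ : ∀ r, 0 < Δ r)
    (W : Fin n → ℝ) :
    (∫ U, ((1 / m) * ∑ i : Fin m, Lc ρ Δ (1 / 2) (W + U) (S i).1 (S i).2)
        ∂(gaussVec (0 : Fin n → ℝ) (σ ^ 2))) ≤
      (1 / m) * ∑ i : Fin m, Lc ρ Δ 1 W (S i).1 (S i).2
      + ((Finset.univ.filter fun i : Fin m =>
            ¬ ((gaussVec (0 : Fin n → ℝ) (σ ^ 2)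
                {U | ∃ r, |ρ r W (S i).1 (S i).2 - ρ r (W + U) (S i).1 (S i).2| > Δ r / 2}).toReal
                  ≤ 1 / Real.sqrt m)).card : ℝ) / m
      + 1 / Real.sqrt m := by

  set μ := gaussVec (0 : Fin n → ℝ) (σ ^ 2) with hμdef
  haveI : IsProbabilityMeasure μ := by
    rw [hμdef]; unfold gaussVec; infer_instance
  have hmeas : ∀ (r : Fin R') (x : Fin N → ℝ) (y : Fin K),
      Measurable fun U : Fin n → ℝ => ρ r (W + U) x y := fun r x y =>
    (hρ r).comp ((measurable_const_add W).prodMk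
      (measurable_const : Measurable fun _ : Fin n → ℝ => ((x, y) : (Fin N → ℝ) × Fin K)))
  set A : Fin m → Set (Fin n → ℝ) := fun i =>
    {U | ∃ r, ρ r (W + U) (S i).1 (S i).2 < (1 / 2) * Δ r} with hA
  set B : Fin m → Set (Fin n → ℝ) := fun i =>
    {U | ∃ r, |ρ r W (S i).1 (S i).2 - ρ r (W + U) (S i).1 (S i).2| > Δ r / 2} with hB
  have hAmeas : ∀ i, MeasurableSet (A i) := by
    intro i
    have h : A i = ⋃ r, {U | ρ r (W + U) (S i).1 (S i).2 < (1 / 2) * Δ r} := by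
      ext U; simp [hA]
    rw [h]
    exact MeasurableSet.iUnion fun r => measurableSet_lt (hmeas r _ _) measurable_const
  have hBmeas : ∀ i, MeasurableSet (B i) := by
    intro i
    have h : B i = ⋃ r,
        {U | Δ r / 2 < |ρ r W (S i).1 (S i).2 - ρ r (W + U) (S i).1 (S i).2|} := by
      ext U; simp [hB, gt_iff_lt]
    rw [h]
    exact MeasurableSet.iUnion fun r =>
      measurableSet_lt measurable_const ((measurable_const.sub (hmeas r _ _)).abs)
  have hLc_eq : ∀ i U, Lc ρ Δ (1 / 2) (W + U) (S i).1 (S i).2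
      = (A i).indicator (fun _ => (1 : ℝ)) U := by
    intro i U
    by_cases h : ∃ r, ρ r (W + U) (S i).1 (S i).2 < (1 / 2) * Δ r <;>
      simp [Lc, iver, Set.indicator, hA, h]
  have hInt : ∀ i, Integrable (fun U => Lc ρ Δ (1 / 2) (W + U) (S i).1 (S i).2) μ := by
    intro i
    have h : Integrable ((A i).indicator (fun _ => (1 : ℝ))) μ :=
      (integrable_indicator_iff (hAmeas i)).2
        (integrableOn_const (measure_ne_top μ _))
    exact h.congr (by filter_upwards with U using (hLc_eq i U).symm)
  have hm' : (0 : ℝ) < Real.sqrt m := Real.sqrt_pos.2 (by exact_mod_cast hm)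
  have hinvm : (0 : ℝ) ≤ 1 / Real.sqrt m := by positivity
  have hLc1nonneg : ∀ i, (0 : ℝ) ≤ Lc ρ Δ 1 W (S i).1 (S i).2 := by
    intro i; unfold Lc iver; split <;> norm_num
  -- key per-point bound
  have key : ∀ i, (∫ U, Lc ρ Δ (1 / 2) (W + U) (S i).1 (S i).2 ∂μ)
      ≤ Lc ρ Δ 1 W (S i).1 (S i).2
        + (if (μ (B i)).toReal ≤ 1 / Real.sqrt m then (0 : ℝ) else 1)
        + 1 / Real.sqrt m := by
    intro i
    have hint : (∫ U, Lc ρ Δ (1 / 2) (W + U) (S i).1 (S i).2 ∂μ) = (μ (A i)).toReal := by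
      rw [integral_congr_ae (by filter_upwards with U using hLc_eq i U)]
      exact integral_indicator_one (hAmeas i)
    have hAle1 : (μ (A i)).toReal ≤ 1 := by
      have := prob_le_one (μ := μ) (s := A i)
      exact ENNReal.toReal_le_of_le_ofReal zero_le_one (by simpa using this)
    by_cases hgood : (μ (B i)).toReal ≤ 1 / Real.sqrt m
    · rw [if_pos hgood, hint]
      have hstep : (μ (A i)).toReal ≤ Lc ρ Δ 1 W (S i).1 (S i).2 + (μ (B i)).toReal := by
        by_cases h1 : ∃ r, ρ r W (S i).1 (S i).2 < 1 * Δ r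
        · have hL1 : Lc ρ Δ 1 W (S i).1 (S i).2 = 1 := by
            unfold Lc iver; rw [if_pos h1]
          rw [hL1]
          have hBnn : (0 : ℝ) ≤ (μ (B i)).toReal := ENNReal.toReal_nonneg
          linarith
        · have hL0 : Lc ρ Δ 1 W (S i).1 (S i).2 = 0 := by
            unfold Lc iver; rw [if_neg h1]
          have hsub : A i ⊆ B i := by
            intro U hU
            obtain ⟨r, hr⟩ := hU
            refine ⟨r, ?_⟩
            push_neg at h1
            have h2 := h1 r
            have : ρ r W (S i).1 (S i).2 - ρ r (W + U) (S i).1 (S i).2 > Δ r / 2 := by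
              linarith
            calc Δ r / 2 < ρ r W (S i).1 (S i).2 - ρ r (W + U) (S i).1 (S i).2 := this
              _ ≤ |ρ r W (S i).1 (S i).2 - ρ r (W + U) (S i).1 (S i).2| := le_abs_self _
          have : (μ (A i)).toReal ≤ (μ (B i)).toReal :=
            ENNReal.toReal_mono (measure_ne_top μ _) (measure_mono hsub)
          rw [hL0]; linarith
      linarith
    · rw [if_neg hgood, hint]
      have := hLc1nonneg i
      linarith
  -- now the sum manipulation
  have hswap : (∫ U, ((1 / m : ℝ) * ∑ i : Fin m, Lc ρ Δ (1 / 2) (W + U) (S i).1 (S i).2) ∂μ)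
      = (1 / m : ℝ) * ∑ i : Fin m, ∫ U, Lc ρ Δ (1 / 2) (W + U) (S i).1 (S i).2 ∂μ := by
    rw [integral_const_mul, integral_finset_sum _ (fun i _ => hInt i)]
  rw [hswap]
  have hsum : ∑ i : Fin m, (∫ U, Lc ρ Δ (1 / 2) (W + U) (S i).1 (S i).2 ∂μ)
      ≤ ∑ i : Fin m, (Lc ρ Δ 1 W (S i).1 (S i).2
        + (if (μ (B i)).toReal ≤ 1 / Real.sqrt m then (0 : ℝ) else 1)
        + 1 / Real.sqrt m) :=
    Finset.sum_le_sum fun i _ => key i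
  have hcard : ∑ i : Fin m, (if (μ (B i)).toReal ≤ 1 / Real.sqrt m then (0 : ℝ) else 1)
      = ((Finset.univ.filter fun i : Fin m =>
          ¬ ((μ (B i)).toReal ≤ 1 / Real.sqrt m)).card : ℝ) := by
    have hswapif : ∀ i : Fin m, (if (μ (B i)).toReal ≤ 1 / Real.sqrt m then (0 : ℝ) else 1)
        = if ¬ ((μ (B i)).toReal ≤ 1 / Real.sqrt m) then (1 : ℝ) else 0 := fun i => by
      by_cases h : (μ (B i)).toReal ≤ 1 / Real.sqrt m
      · rw [if_pos h, if_neg (not_not_intro h)]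
      · rw [if_neg h, if_pos h]
    rw [Finset.sum_congr rfl fun i _ => hswapif i, Finset.sum_boole]
  have hmpos : (0 : ℝ) < m := by exact_mod_cast hm
  have hfinal : (1 / m : ℝ) * ∑ i : Fin m, (Lc ρ Δ 1 W (S i).1 (S i).2
        + (if (μ (B i)).toReal ≤ 1 / Real.sqrt m then (0 : ℝ) else 1)
        + 1 / Real.sqrt m)
      = (1 / m : ℝ) * ∑ i : Fin m, Lc ρ Δ 1 W (S i).1 (S i).2
        + ((Finset.univ.filter fun i : Fin m =>
            ¬ ((μ (B i)).toReal ≤ 1 / Real.sqrt m)).card : ℝ) / m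
        + 1 / Real.sqrt m := by
    rw [Finset.sum_add_distrib, Finset.sum_add_distrib, hcard, Finset.sum_const,
      Finset.card_univ, Fintype.card_fin, nsmul_eq_mul]
    have h1 : (1 / (m : ℝ)) * ((m : ℝ) * (1 / Real.sqrt m)) = 1 / Real.sqrt m := by
      rw [one_div (m : ℝ), inv_mul_cancel_left₀ (ne_of_gt hmpos)]
    rw [mul_add, mul_add, h1]
    ring
  calc (1 / m : ℝ) * ∑ i : Fin m, ∫ U, Lc ρ Δ (1 / 2) (W + U) (S i).1 (S i).2 ∂μ
      ≤ (1 / m : ℝ) * ∑ i : Fin m, (Lc ρ Δ 1 W (S i).1 (S i).2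
        + (if (μ (B i)).toReal ≤ 1 / Real.sqrt m then (0 : ℝ) else 1)
        + 1 / Real.sqrt m) := by
        apply mul_le_mul_of_nonneg_left hsum (by positivity)
    _ = _ := hfinal
end

section
/- For the ReLU network with weights W = (W_1,…,W_D), fix an input x ∈ ℝ^N and arbitrary weight perturbation matrices U = (U_1,…,U_D) of the same shapes. Let M_{d}(x) be the diagonal 0/1 matrix recording the activation state (1 if g^{d}_{W,h}(x) > 0, else 0) of each unit of layer d of the unperturbed network on x, and for 0 ≤ k ≤ D let W[+U_k] denote the frozen-activation perturbed network defined by g^d_{W[+U_k]}(x) := (W_d + U_d·1[d ≤ k])·f^{d−1}_{W[+U_k]}(x) and f^{d}_{W[+U_k]}(x) := M_{d}(x)·g^{d}_{W[+U_k]}(x) for d < D, with f^{0}_{W[+U_k]}(x) := x. Then for every 1 ≤ d' ≤ d ≤ D: g^d_{W[+U_{d'}]}(x) − g^d_{W[+U_{d'−1}]}(x) = J^{d'→d}_W(x) · U_{d'} · f^{d'−1}_{W[+U_{d'−1}]}(x). -/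
open scoped Classical

noncomputable section

variable (p : ℕ → ℕ)

/-- Layer outputs `f^d_W(x)` of the ReLU network (`f^0 = x`). -/
def layerOut (W : (d : ℕ) → Fin (p (d + 1)) → Fin (p d) → ℝ)
    (x : Fin (p 0) → ℝ) : (d : ℕ) → Fin (p d) → ℝ
  | 0 => x
  | e + 1 => fun h => max 0 (∑ j, W e h j * layerOut W x e j)

/-- Pre-activations `g^d_W(x)` of the ReLU network (for `d ≥ 1`; `g^0 = x` by convention). -/
def preact (W : (d : ℕ) → Fin (p (d + 1)) → Fin (p d) → ℝ)
    (x : Fin (p 0) → ℝ) : (d : ℕ) → Fin (p d) → ℝ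
  | 0 => x
  | e + 1 => fun h => ∑ j, W e h j * layerOut p W x e j

/-- The activation-masked Jacobian `J^{d'→d}_W(x)`: `J^{d'→d'} = I` and
`J^{d'→(e+1)} = W_{e+1} · M_e(x) · J^{d'→e}`, where `M_e(x)` is the diagonal 0/1
activation mask of layer `e` of the unperturbed network at `x`. -/
def jacb (W : (d : ℕ) → Fin (p (d + 1)) → Fin (p d) → ℝ)
    (x : Fin (p 0) → ℝ) (d' : ℕ) : (d : ℕ) → Fin (p d) → Fin (p d') → ℝ
  | 0 => fun i j => if h : d' = 0 then (if Fin.cast (congrArg p h) j = i then 1 else 0) else 0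
  | e + 1 => fun i j =>
      if h : d' = e + 1 then (if Fin.cast (congrArg p h) j = i then 1 else 0)
      else ∑ k, W e i k * (if 0 < preact p W x e k then 1 else 0) * jacb W x d' e k j

/-- Frozen-activation layer outputs `f^d_{W[+U_k]}(x)`: the first `k` weight matrices are
perturbed by `U` and every hidden unit is frozen at its unperturbed activation state. -/
def frozenOut (W U : (d : ℕ) → Fin (p (d + 1)) → Fin (p d) → ℝ)
    (x : Fin (p 0) → ℝ) (k : ℕ) : (d : ℕ) → Fin (p d) → ℝ
  | 0 => x
  | e + 1 => fun h => (if 0 < preact p W x (e + 1) h then 1 else 0) *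
      ∑ j, (if e < k then W e h j + U e h j else W e h j) * frozenOut W U x k e j

/-- Frozen-activation pre-activations `g^d_{W[+U_k]}(x)`. -/
def frozenPre (W U : (d : ℕ) → Fin (p (d + 1)) → Fin (p d) → ℝ)
    (x : Fin (p 0) → ℝ) (k : ℕ) : (d : ℕ) → Fin (p d) → ℝ
  | 0 => x
  | e + 1 => fun h =>
      ∑ j, (if e < k then W e h j + U e h j else W e h j) * frozenOut p W U x k e j

/-- Frozen-activation Jacobian `J^{d'→d}_{W[+U_k]}(x)`: the weight matrices (the first `k`
of them perturbed) multiplied with the activation masks of the unperturbed network at `x`. -/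
def frozenJacb (W U : (d : ℕ) → Fin (p (d + 1)) → Fin (p d) → ℝ)
    (x : Fin (p 0) → ℝ) (k : ℕ) (d' : ℕ) : (d : ℕ) → Fin (p d) → Fin (p d') → ℝ
  | 0 => fun i j => if h : d' = 0 then (if Fin.cast (congrArg p h) j = i then 1 else 0) else 0
  | e + 1 => fun i j =>
      if h : d' = e + 1 then (if Fin.cast (congrArg p h) j = i then 1 else 0)
      else ∑ a, (if e < k then W e i a + U e i a else W e i a) *
        (if 0 < preact p W x e a then 1 else 0) * frozenJacb W U x k d' e a j

end

lemma frozenOut_succ_eq (p : ℕ → ℕ) (W U : (d : ℕ) → Fin (p (d + 1)) → Fin (p d) → ℝ)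
    (x : Fin (p 0) → ℝ) (e : ℕ) :
    ∀ d, d ≤ e → frozenOut p W U x (e + 1) d = frozenOut p W U x e d := by
  intro d
  induction d with
  | zero => intro _; rfl
  | succ d ih =>
    intro hd
    have hde : d < e := hd
    funext h
    simp only [frozenOut, ih (Nat.le_of_succ_le hd), hde, Nat.lt_succ_of_lt hde, if_true]

lemma frozenOut_eq_mask_pre (p : ℕ → ℕ) (W U : (d : ℕ) → Fin (p (d + 1)) → Fin (p d) → ℝ)
    (x : Fin (p 0) → ℝ) (k : ℕ) (d : ℕ) (hd : 1 ≤ d) (h : Fin (p d)) :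
    frozenOut p W U x k d h =
      (if 0 < preact p W x d h then 1 else 0) * frozenPre p W U x k d h := by
  cases d with
  | zero => omega
  | succ n => rfl

/-- with activations frozen, the change in the layer-`d` pre-activations
caused by additionally perturbing the `d'`-th weight matrix (here `d' = e + 1`, paper indexing)
factors as (unperturbed Jacobian `J^{d'→d}_W(x)`) · (perturbation `U_{d'}`) ·
(layer-`(d'−1)` output of the frozen network with the first `d'−1` matrices perturbed). -/
theorem frozen_preact_perturbation_factorization
    (p : ℕ → ℕ) (W U : (d : ℕ) → Fin (p (d + 1)) → Fin (p d) → ℝ)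
    (x : Fin (p 0) → ℝ) (Dnet : ℕ)
    (e d : ℕ) (hde : e + 1 ≤ d) (hdD : d ≤ Dnet) (h : Fin (p d)) :
    frozenPre p W U x (e + 1) d h - frozenPre p W U x e d h =
      ∑ a : Fin (p (e + 1)), jacb p W x (e + 1) d h a *
        (∑ b : Fin (p e), U e a b * frozenOut p W U x e e b) := by
  clear hdD
  induction d, hde using Nat.le_induction with
  | base =>
    simp only [frozenPre, jacb, dif_pos rfl, Fin.cast_refl, id,
      frozenOut_succ_eq p W U x e e le_rfl, Nat.lt_irrefl, if_false, Nat.lt_succ_self, if_true,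
      dite_true, ite_mul, one_mul, zero_mul]
    rw [Finset.sum_ite_eq' Finset.univ h, if_pos (Finset.mem_univ h), ← Finset.sum_sub_distrib]
    apply Finset.sum_congr rfl
    intro j _
    ring
  | succ n hn ih =>
    have hne : ¬ (n < e + 1) := by omega
    have hne' : ¬ (n < e) := by omega
    have hd : ¬ ((e : ℕ) + 1 = n + 1) := by omega
    simp only [frozenPre, hne, hne', if_false, jacb, dif_neg hd]
    have key : ∀ j : Fin (p n),
        frozenOut p W U x (e + 1) n j - frozenOut p W U x e n j =
          (if 0 < preact p W x n j then 1 else 0) *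
            ∑ a : Fin (p (e + 1)), jacb p W x (e + 1) n j a *
              (∑ b : Fin (p e), U e a b * frozenOut p W U x e e b) := by
      intro j
      rw [frozenOut_eq_mask_pre p W U x (e + 1) n (by omega) j,
        frozenOut_eq_mask_pre p W U x e n (by omega) j, ← mul_sub, ih j]
    rw [← Finset.sum_sub_distrib]
    simp only [← mul_sub, key]
    simp only [Finset.mul_sum, Finset.sum_mul]
    rw [Finset.sum_comm]
    apply Finset.sum_congr rfl
    intro a _
    rw [Finset.sum_comm]
    apply Finset.sum_congr rfl
    intro b _
    apply Finset.sum_congr rfl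
    intro j _
    ring
end
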